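/- arXiv:1301.5684 — 2 statements merged into one kernel-verified Lean document; each statement's English description precedes it below -/
import Mathlib

section
/- Let m_1^l, m_2^l, m̂^l ∈ F_q^l with m̂^l ≠ m_1^l + m_2^l, where l ≥ 1 and n ≥ 1. Let G_{O/I} ∈ F_q^{l×n} and B_1^n, B_2^n ∈ F_q^n be mutually independent and uniformly distributed, and set B^n := B_1^n + B_2^n. Then for any vectors v_1^n, v_2^n, v^n ∈ F_q^n, P(m_1^l G_{O/I} + B_1^n = v_1^n, m_2^l G_{O/I} + B_2^n = v_2^n, m̂^l G_{O/I} + B^n = v^n) = q^{-3n}. -/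
/-!
Once `G` is known, `B₁` and `B₂` are pinned down by the first two codewords, and the third
equation becomes `(m̂ - (m₁ + m₂)) G = v - v₁ - v₂`. As `m̂ - (m₁ + m₂) ≠ 0`, this makes the
codeword triple a surjective additive map of the uniform variable `(G, B₁, B₂)`, and a
surjective homomorphism of finite groups pushes the uniform distribution forward to the
uniform distribution.
-/

open Matrix Finset

theorem AddMonoidHom.card_fiber_mul_card_of_surjective {G H : Type*} [AddGroup G] [Fintype G]
    [AddMonoid H] [Fintype H] [DecidableEq H] (f : G →+ H) (hf : Function.Surjective f)
    (h : H) : #{g | f g = h} * Fintype.card H = Fintype.card G := by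
  have hfibers : ∀ h' ∈ (univ : Finset H), #{g | f g = h'} = #{g | f g = h} := fun h' _ ↦
    AddMonoidHom.card_fiber_eq_of_mem_range f (hf h') (hf h)
  calc #{g | f g = h} * Fintype.card H = ∑ h' : H, #{g | f g = h'} := by
        rw [sum_congr rfl hfibers, sum_const, card_univ, smul_eq_mul, mul_comm]
    _ = Fintype.card G := (card_eq_sum_card_fiberwise fun _ _ ↦ mem_univ _).symm

theorem Matrix.exists_vecMul_eq_of_ne_zero {K l n : Type*} [DivisionRing K] [Fintype l]
    {c : l → K} (hc : c ≠ 0) (w : n → K) : ∃ G : Matrix l n K, c ᵥ* G = w := by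
  classical
  obtain ⟨i, hi⟩ := Function.ne_iff.mp hc
  refine ⟨vecMulVec (Pi.single i (c i)⁻¹) w, ?_⟩
  rw [vecMul_vecMulVec, dotProduct_single, mul_inv_cancel₀ hi, one_smul]

section CodewordTriple

variable {R l n : Type*} [Ring R] [Fintype l]

def codewordTriple (m₁ m₂ m : l → R) :
    Matrix l n R × (n → R) × (n → R) →+ (n → R) × (n → R) × (n → R) :=
  AddMonoidHom.mk' (fun ω ↦ (m₁ ᵥ* ω.1 + ω.2.1, m₂ ᵥ* ω.1 + ω.2.2, m ᵥ* ω.1 + (ω.2.1 + ω.2.2)))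
    fun ω ω' ↦ by simp only [Prod.fst_add, Prod.snd_add, vecMul_add, Prod.mk_add_mk]; abel_nf

@[simp]
theorem codewordTriple_apply (m₁ m₂ m : l → R) (ω : Matrix l n R × (n → R) × (n → R)) :
    codewordTriple m₁ m₂ m ω =
      (m₁ ᵥ* ω.1 + ω.2.1, m₂ ᵥ* ω.1 + ω.2.2, m ᵥ* ω.1 + (ω.2.1 + ω.2.2)) :=
  rfl

theorem codewordTriple_surjective {K : Type*} [DivisionRing K] {m₁ m₂ m : l → K}
    (hne : m ≠ m₁ + m₂) : Function.Surjective (codewordTriple (n := n) m₁ m₂ m) := by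
  rintro ⟨v₁, v₂, v⟩
  obtain ⟨G, hG⟩ := exists_vecMul_eq_of_ne_zero (sub_ne_zero.mpr hne) (v - v₁ - v₂)
  refine ⟨(G, v₁ - m₁ ᵥ* G, v₂ - m₂ ᵥ* G), ?_⟩
  have hthird : m ᵥ* G + (v₁ - m₁ ᵥ* G + (v₂ - m₂ ᵥ* G)) = v :=
    calc _ = (m - (m₁ + m₂)) ᵥ* G + v₁ + v₂ := by rw [sub_vecMul, add_vecMul]; abel
      _ = v := by rw [hG]; abel
  simp [hthird]

end CodewordTriple

theorem stmt_3_general {F : Type*} [Field F] [Fintype F] [DecidableEq F] {l n : ℕ}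
    (m1 m2 mh : Fin l → F) (hne : mh ≠ m1 + m2)
    (v1 v2 v : Fin n → F) :
    ((Finset.univ.filter
        (fun ω : Matrix (Fin l) (Fin n) F × (Fin n → F) × (Fin n → F) =>
          m1 ᵥ* ω.1 + ω.2.1 = v1 ∧
          m2 ᵥ* ω.1 + ω.2.2 = v2 ∧
          mh ᵥ* ω.1 + (ω.2.1 + ω.2.2) = v)).card : ℚ)
      / (Fintype.card
          (Matrix (Fin l) (Fin n) F × (Fin n → F) × (Fin n → F)) : ℚ)
      = 1 / (Fintype.card F : ℚ) ^ (3 * n) := by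
  have hfiber := (codewordTriple m1 m2 mh).card_fiber_mul_card_of_surjective
    (codewordTriple_surjective hne) (v1, v2, v)
  have hcodomain : Fintype.card ((Fin n → F) × (Fin n → F) × (Fin n → F)) =
      Fintype.card F ^ (3 * n) := by
    simp only [Fintype.card_prod, Fintype.card_fun, Fintype.card_fin]; ring
  have hΩ : (Fintype.card (Matrix (Fin l) (Fin n) F × (Fin n → F) × (Fin n → F)) : ℚ) ≠ 0 :=
    Nat.cast_ne_zero.mpr Fintype.card_ne_zero
  rw [show univ.filter _ = ({ω | codewordTriple m1 m2 mh ω = (v1, v2, v)} : Finset _) by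
      ext; simp [Prod.ext_iff],
    div_eq_div_iff hΩ (by positivity), one_mul, ← hfiber, hcodomain]
  push_cast
  rfl

/-- Lemma 2(c).  With `G_{O/I}, B₁, B₂` mutually independent uniform,
`B = B₁ + B₂`, and `m̂ ≠ m₁ + m₂`, the three codewords
`m₁ G_{O/I} + B₁`, `m₂ G_{O/I} + B₂`, `m̂ G_{O/I} + B` are jointly uniform:
each triple of values has probability `q^{-3n}`. -/
theorem stmt_3 {F : Type*} [Field F] [Fintype F] [DecidableEq F] {l n : ℕ}
    (hl : 1 ≤ l) (hn : 1 ≤ n)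
    (m1 m2 mh : Fin l → F) (hne : mh ≠ m1 + m2)
    (v1 v2 v : Fin n → F) :
    ((Finset.univ.filter
        (fun ω : Matrix (Fin l) (Fin n) F × (Fin n → F) × (Fin n → F) =>
          m1 ᵥ* ω.1 + ω.2.1 = v1 ∧
          m2 ᵥ* ω.1 + ω.2.2 = v2 ∧
          mh ᵥ* ω.1 + (ω.2.1 + ω.2.2) = v)).card : ℚ)
      / (Fintype.card
          (Matrix (Fin l) (Fin n) F × (Fin n → F) × (Fin n → F)) : ℚ)
      = 1 / (Fintype.card F : ℚ) ^ (3 * n) :=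
  stmt_3_general m1 m2 mh hne v1 v2 v
end

section
/- Let G_I ∈ F_q^{k×n}, G_{O/I} ∈ F_q^{l×n}, B_1^n, B_2^n ∈ F_q^n be mutually independent and uniformly distributed. Define V_j^n(a^k, m^l) := a^k G_I + m^l G_{O/I} + B_j^n and the coset C_j(m^l) := (V_j^n(a^k, m^l) : a^k ∈ F_q^k), and let V^n(a^k, m^l) := a^k G_I + m^l G_{O/I} + B_1^n + B_2^n. Then for any m_1^l, m_2^l ∈ F_q^l and any â^k ∈ F_q^k, m̂^l ∈ F_q^l with m̂^l ≠ m_1^l + m_2^l, the pair of random tuples (C_1(m_1^l), C_2(m_2^l)) is statistically independent of the random vector V^n(â^k, m̂^l). -/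
open Matrix MeasureTheory ProbabilityTheory

namespace Stmt5

variable {F : Type} [Field F] [Fintype F] [DecidableEq F] {k l n : ℕ}

/-- Sample space: generator matrices `G_I`, `G_{O/I}` and the two bias vectors. -/
abbrev Ω (F : Type) [Fintype F] (k l n : ℕ) : Type :=
  Matrix (Fin k) (Fin n) F × Matrix (Fin l) (Fin n) F × (Fin n → F) × (Fin n → F)

instance : MeasurableSpace (Ω F k l n) := ⊤
instance : MeasurableSpace (Fin n → F) := ⊤
instance : MeasurableSpace ((Fin k → F) → (Fin n → F)) := ⊤

/-- Uniform probability measure: `G_I, G_{O/I}, B₁, B₂` mutually independent and uniform. -/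
noncomputable def μunif (F : Type) [Field F] [Fintype F] (k l n : ℕ) :
    Measure (Ω F k l n) :=
  (PMF.uniformOfFintype (Ω F k l n)).toMeasure

end Stmt5

/-!
Choose `u` with `(m̂ - m₁ - m₂) ⬝ᵥ u = 1` and let `v ∈ Fⁿ` act on the sample space by
`(G_I, G_{O/I}, B₁, B₂) ↦ (G_I, G_{O/I} + u vᵀ, B₁ - (m₁ ⬝ᵥ u) v, B₂ - (m₂ ⬝ᵥ u) v)`.
This action fixes both cosets and translates `V(â, m̂)` by `v`. Hence the sample space splits as
`{V(â, m̂) = 0} × Fⁿ`, with the cosets depending only on the first factor and `V(â, m̂)` being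
the second, and the two factors of a uniformly distributed pair are independent.
-/

open scoped ENNReal

namespace PMF

variable {Ω β γ : Type*} [Fintype Ω] [Nonempty Ω] [MeasurableSpace Ω] [DiscreteMeasurableSpace Ω]

lemma toMeasure_uniformOfFintype_eq_natCard_div (s : Set Ω) :
    (uniformOfFintype Ω).toMeasure s = Nat.card s / Nat.card Ω := by
  classical
  rw [toMeasure_uniformOfFintype_apply s .of_discrete, Fintype.card_eq_nat_card,
    Fintype.card_eq_nat_card]

lemma toMeasure_uniformOfFintype_preimage_prod [Finite β] [Finite γ] (e : Ω ≃ β × γ)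
    (S : Set β) (T : Set γ) :
    (uniformOfFintype Ω).toMeasure (e ⁻¹' S ×ˢ T) =
      Nat.card S / Nat.card β * (Nat.card T / Nat.card γ) := by
  have hcard : Nat.card (e ⁻¹' S ×ˢ T) = Nat.card S * Nat.card T := by
    rw [← Nat.card_prod]
    exact Nat.card_congr ((e.subtypeEquiv fun _ => Iff.rfl).trans (Equiv.Set.prod S T))
  rw [toMeasure_uniformOfFintype_eq_natCard_div, hcard, Nat.card_congr e, Nat.card_prod,
    Nat.cast_mul, Nat.cast_mul, ENNReal.mul_div_mul_comm (.inr (ENNReal.natCast_ne_top _))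
      (.inl (ENNReal.natCast_ne_top _))]

end PMF

lemma ENNReal.natCard_div_natCard_self (α : Type*) [Finite α] [Nonempty α] :
    (Nat.card α : ℝ≥0∞) / Nat.card α = 1 :=
  ENNReal.div_self (Nat.cast_ne_zero.2 Nat.card_pos.ne') (ENNReal.natCast_ne_top _)

def AddAction.equivFiberZeroProd {Ω V : Type*} [AddGroup V] [AddAction V Ω] (Y : Ω → V)
    (hY : ∀ (v : V) ω, Y (v +ᵥ ω) = v + Y ω) : Ω ≃ {ω // Y ω = 0} × V where
  toFun ω := (⟨-Y ω +ᵥ ω, by rw [hY, neg_add_cancel]⟩, Y ω)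
  invFun p := p.2 +ᵥ p.1.1
  left_inv ω := vadd_neg_vadd (Y ω) ω
  right_inv := by
    rintro ⟨⟨ω, hω⟩, v⟩
    have hv : Y (v +ᵥ ω) = v := by rw [hY, hω, add_zero]
    simp [hv]

namespace ProbabilityTheory

variable {Ω α : Type*} [Fintype Ω] [Nonempty Ω] [MeasurableSpace Ω] [DiscreteMeasurableSpace Ω]
  [MeasurableSpace α]

theorem indepFun_uniformOfFintype_of_equiv_prod {β γ α' : Type*} [MeasurableSpace α']
    [Finite β] [Finite γ] (e : Ω ≃ β × γ) (f : β → α) (g : γ → α') :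
    IndepFun (fun ω => f (e ω).1) (fun ω => g (e ω).2) (PMF.uniformOfFintype Ω).toMeasure := by
  have : Nonempty β := ⟨(e (Classical.arbitrary Ω)).1⟩
  have : Nonempty γ := ⟨(e (Classical.arbitrary Ω)).2⟩
  rw [indepFun_iff_measure_inter_preimage_eq_mul]
  intro s t _ _
  have hs : (fun ω => f (e ω).1) ⁻¹' s = e ⁻¹' (f ⁻¹' s) ×ˢ Set.univ := by ext; simp
  have ht : (fun ω => g (e ω).2) ⁻¹' t = e ⁻¹' Set.univ ×ˢ (g ⁻¹' t) := by ext; simp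
  have hst : (fun ω => f (e ω).1) ⁻¹' s ∩ (fun ω => g (e ω).2) ⁻¹' t =
      e ⁻¹' (f ⁻¹' s) ×ˢ (g ⁻¹' t) := by ext; simp
  rw [hst, hs, ht]
  simp only [PMF.toMeasure_uniformOfFintype_preimage_prod, Nat.card_univ,
    ENNReal.natCard_div_natCard_self]
  ring

theorem indepFun_uniformOfFintype_of_vadd {V : Type*} [AddGroup V] [Finite V] [AddAction V Ω]
    [MeasurableSpace V] (X : Ω → α) (Y : Ω → V) (hX : ∀ (v : V) ω, X (v +ᵥ ω) = X ω)
    (hY : ∀ (v : V) ω, Y (v +ᵥ ω) = v + Y ω) :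
    IndepFun X Y (PMF.uniformOfFintype Ω).toMeasure := by
  convert indepFun_uniformOfFintype_of_equiv_prod (AddAction.equivFiberZeroProd Y hY)
    (fun ω₀ => X ω₀.1) id using 2 with ω ω
  · exact (hX _ ω).symm
  · rfl

end ProbabilityTheory

theorem Matrix.exists_dotProduct_eq_one {ι K : Type*} [Fintype ι] [DecidableEq ι] [Field K]
    {w : ι → K} (hw : w ≠ 0) : ∃ u, w ⬝ᵥ u = 1 := by
  obtain ⟨i, hi⟩ := Function.ne_iff.mp hw
  exact ⟨Pi.single i (w i)⁻¹, by rw [dotProduct_single, mul_inv_cancel₀ hi]⟩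

namespace Stmt5

def cosetShift {R : Type} [CommRing R] [Fintype R] {k l n : ℕ} (m1 m2 u : Fin l → R) :
    (Fin n → R) →+ Ω R k l n where
  toFun v := (0, vecMulVec u v, -(m1 ⬝ᵥ u) • v, -(m2 ⬝ᵥ u) • v)
  map_zero' := by ext <;> simp [vecMulVec]
  map_add' v w := by simp [vecMulVec_add]

variable {F : Type} [Field F] [Fintype F] [DecidableEq F] {k l n : ℕ}

/-- Lemma 3: the pair of cosets `(C₁(m₁), C₂(m₂))` (each the ordered
`q^k`-tuple of codewords `a ↦ a G_I + m_j G_{O/I} + B_j`) is statistically independent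
of the codeword `V(â, m̂) = â G_I + m̂ G_{O/I} + B₁ + B₂` whenever `m̂ ≠ m₁ + m₂`. -/
theorem stmt_5 (m1 m2 mh : Fin l → F) (ah : Fin k → F) (hne : mh ≠ m1 + m2) :
    IndepFun
      (fun ω : Ω F k l n =>
        ((fun a : Fin k → F => a ᵥ* ω.1 + m1 ᵥ* ω.2.1 + ω.2.2.1),
         (fun a : Fin k → F => a ᵥ* ω.1 + m2 ᵥ* ω.2.1 + ω.2.2.2)))
      (fun ω : Ω F k l n => ah ᵥ* ω.1 + mh ᵥ* ω.2.1 + (ω.2.2.1 + ω.2.2.2))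
      (μunif F k l n) := by
  obtain ⟨u, hu⟩ := exists_dotProduct_eq_one (sub_ne_zero.2 hne)
  rw [sub_dotProduct, add_dotProduct] at hu
  let _ : AddAction (Fin n → F) (Ω F k l n) := .compHom _ (cosetShift (k := k) m1 m2 u)
  refine indepFun_uniformOfFintype_of_vadd _ _ (fun v ω => ?cosets_fixed)
    (fun v ω => ?codeword_translated)
  all_goals simp only [AddAction.compHom_vadd_def, vadd_eq_add, cosetShift, AddMonoidHom.coe_mk,
    ZeroHom.coe_mk, Prod.fst_add, Prod.snd_add, zero_add, vecMul_add, vecMul_vecMulVec]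
  case cosets_fixed => congr 1 <;> funext a <;> module
  case codeword_translated => linear_combination (norm := module) hu • v

end Stmt5
end
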